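/- (F Bayes factor.) For every k > 0, m > 0, τ > 0, r ≥ 1 and f > 0: ∫_0^∞ q_{k,m}(f|λ) · γ(λ; k/2+r, 1/(2τ²)) dλ = q_{k,m}(f|0) · (1+τ²)^{−(k/2+r)} · ₂F₁(k/2+r, (k+m)/2, k/2; kfτ²/((1+τ²)(m+kf))). Equivalently, the F Bayes factor BF₁₀(f|τ²,r) = (∫_0^∞ q_{k,m}(f|λ) γ(λ; k/2+r, 1/(2τ²)) dλ)/q_{k,m}(f|0) equals (1+τ²)^{−(k/2+r)} ₂F₁(k/2+r, (k+m)/2, k/2; kfτ²/((1+τ²)(m+kf))). -/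

import Mathlib

open Real MeasureTheory Filter

/-- Rising factorial (Pochhammer symbol) `(a)_k`. -/
noncomputable def risingFac (a : ℝ) (k : ℕ) : ℝ := (ascPochhammer ℝ k).eval a

/-- Gaussian hypergeometric function `₂F₁(a, b, c; x)` (as a series). -/
noncomputable def twoF1 (a b c x : ℝ) : ℝ :=
  ∑' k : ℕ, (risingFac a k * risingFac b k / (risingFac c k * (Nat.factorial k : ℝ))) * x ^ k

/-- Noncentral `F` density with `(k, m)` degrees of freedom and noncentrality `lam`. -/
noncomputable def ncFPdf (k m lam f : ℝ) : ℝ :=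
  ∑' i : ℕ, Real.exp (-lam / 2) * (lam / 2) ^ i / (Nat.factorial i : ℝ) *
    (Real.Gamma ((k + m) / 2 + i) / (Real.Gamma (k / 2 + i) * Real.Gamma (m / 2))) *
    (k / m) ^ (k / 2 + (i : ℝ)) * f ^ (k / 2 + (i : ℝ) - 1) *
    (1 + k * f / m) ^ (-(k + m) / 2 - (i : ℝ))

/-- Gamma density with shape `α` and rate `b`. -/
noncomputable def gammaPdf (α b lam : ℝ) : ℝ :=
  b ^ α * lam ^ (α - 1) * Real.exp (-b * lam) / Real.Gamma α


/-!
The noncentral `F` density is a Poisson(`λ/2`) mixture of the terms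
`q_{k,m}(f|0) ((k+m)/2)_i / (k/2)_i (kf/(m+kf))^i`. Integrating a Poisson(`sλ`) weight against a
Gamma(`α`, `b`) density gives the negative binomial probability
`(α)_i / i! (b/(b+s))^α (s/(b+s))^i`; for `s = 1/2`, `b = 1/(2τ²)` these are
`(α)_i / i! (1+τ²)^{-α} (τ²/(1+τ²))^i`. All terms being nonnegative, sum and integral may be
exchanged as soon as the resulting hypergeometric series converges, which it does because its
argument `kfτ²/((1+τ²)(m+kf))` lies in `(0, 1)`.
-/

open Set Nat

lemma risingFac_pos {a : ℝ} (ha : 0 < a) (n : ℕ) : 0 < risingFac a n :=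
  ascPochhammer_pos n a ha

lemma Real.Gamma_add_nat_eq_mul_risingFac {a : ℝ} (ha : ∀ j : ℕ, a + j ≠ 0) (n : ℕ) :
    Gamma (a + n) = Gamma a * risingFac a n := by
  induction n with
  | zero => simp [risingFac]
  | succ n ih =>
    rw [Nat.cast_succ, ← add_assoc, Gamma_add_one (ha n), ih]
    simp only [risingFac, ascPochhammer_succ_eval]
    ring

lemma summable_twoF1_term {a b c x : ℝ}
    (habc : ∀ n : ℕ, (n : ℝ) ≠ -a ∧ (n : ℝ) ≠ -b ∧ (n : ℝ) ≠ -c) (hx : |x| < 1) :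
    Summable fun n : ℕ => risingFac a n * risingFac b n / (risingFac c n * n !) * x ^ n := by
  have hx' : x ∈ Metric.eball (0 : ℝ) (ordinaryHypergeometricSeries ℝ a b c).radius := by
    rw [ordinaryHypergeometricSeries_radius_eq_one _ _ _ _ habc, Metric.mem_eball, edist_zero_right]
    simpa [Real.enorm_eq_ofReal_abs, ENNReal.ofReal_lt_one] using hx
  refine ((ordinaryHypergeometricSeries ℝ a b c).summable hx').congr fun n => ?_
  rw [ordinaryHypergeometricSeries_apply_eq, smul_eq_mul]
  simp only [risingFac, div_eq_mul_inv, mul_inv]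
  ring

noncomputable def poissonWeight (μ : ℝ) (i : ℕ) : ℝ := exp (-μ) * μ ^ i / i !

lemma poissonWeight_mul_gammaPdf {α b s l : ℝ} (hl : 0 < l) (i : ℕ) :
    poissonWeight (s * l) i * gammaPdf α b l
      = s ^ i * b ^ α / (i ! * Gamma α) * (l ^ (α + i - 1) * exp (-((b + s) * l))) := by
  rw [poissonWeight, gammaPdf, show α + i - 1 = (α - 1) + i by ring, rpow_add hl, rpow_natCast,
    show -((b + s) * l) = -(s * l) + -b * l by ring, exp_add, mul_pow]
  ring

lemma integral_poissonWeight_mul_gammaPdf {α b s : ℝ} (hα : 0 < α) (hb : 0 < b) (hs : 0 ≤ s)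
    (i : ℕ) :
    ∫ l in Ioi 0, poissonWeight (s * l) i * gammaPdf α b l
      = risingFac α i / i ! * (b / (b + s)) ^ α * (s / (b + s)) ^ i := by
  have hbs : 0 < b + s := by linarith
  rw [setIntegral_congr_fun measurableSet_Ioi fun l hl => poissonWeight_mul_gammaPdf hl i,
    integral_const_mul, integral_rpow_mul_exp_neg_mul_Ioi (by positivity) hbs,
    Gamma_add_nat_eq_mul_risingFac (fun j => by positivity), rpow_add (by positivity), rpow_natCast,
    div_rpow hb.le hbs.le, div_pow, one_pow, one_div, inv_rpow hbs.le, div_pow]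
  have : Gamma α ≠ 0 := (Gamma_pos_of_pos hα).ne'
  field_simp

lemma integrableOn_poissonWeight_mul_gammaPdf {α b s : ℝ} (hα : 0 < α) (hb : 0 < b) (hs : 0 ≤ s)
    (i : ℕ) :
    IntegrableOn (fun l => poissonWeight (s * l) i * gammaPdf α b l) (Ioi 0) := by
  have hbs : 0 < b + s := by linarith
  have hG : IntegrableOn (fun l => l ^ (α + i - 1) * exp (-((b + s) * l))) (Ioi 0) :=
    Integrable.of_integral_ne_zero <| by
      rw [integral_rpow_mul_exp_neg_mul_Ioi (by positivity) hbs]; positivity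
  exact IntegrableOn.congr_fun (hG.const_mul _)
    (fun l hl => (poissonWeight_mul_gammaPdf hl i).symm) measurableSet_Ioi

lemma integral_tsum_of_nonneg {ι Ω : Type*} [Countable ι] [MeasurableSpace Ω] {μ : Measure Ω}
    {g : ι → Ω → ℝ} (hint : ∀ i, Integrable (g i) μ) (hnn : ∀ i, 0 ≤ᵐ[μ] g i)
    (hsum : Summable fun i => ∫ x, g i x ∂μ) :
    ∫ x, ∑' i, g i x ∂μ = ∑' i, ∫ x, g i x ∂μ := by
  refine (integral_tsum_of_summable_integral_norm hint ?_).symm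
  simpa only [fun i => integral_congr_ae ((hnn i).mono fun x hx => Real.norm_of_nonneg hx)]
    using hsum

theorem integral_tsum_poissonWeight_mul_gammaPdf {α b s : ℝ} (hα : 0 < α) (hb : 0 < b)
    (hs : 0 ≤ s) {c : ℕ → ℝ} (hc : ∀ i, 0 ≤ c i)
    (hsum : Summable fun i => risingFac α i / i ! * (s / (b + s)) ^ i * c i) :
    ∫ l in Ioi 0, (∑' i, poissonWeight (s * l) i * c i) * gammaPdf α b l
      = (b / (b + s)) ^ α * ∑' i, risingFac α i / i ! * (s / (b + s)) ^ i * c i := by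
  have hterm : ∀ i, ∫ l in Ioi 0, poissonWeight (s * l) i * gammaPdf α b l * c i
      = (b / (b + s)) ^ α * (risingFac α i / i ! * (s / (b + s)) ^ i * c i) := fun i => by
    rw [integral_mul_const, integral_poissonWeight_mul_gammaPdf hα hb hs]
    ring
  have hnn : ∀ i, 0 ≤ᵐ[volume.restrict (Ioi 0)]
      fun l => poissonWeight (s * l) i * gammaPdf α b l * c i := fun i =>
    (ae_restrict_iff' measurableSet_Ioi).2 <| .of_forall fun l hl => by
      simp only [Pi.zero_apply, poissonWeight_mul_gammaPdf hl]
      have hl : 0 < l := hl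
      exact mul_nonneg (by positivity) (hc i)
  calc _ = ∫ l in Ioi 0, ∑' i, poissonWeight (s * l) i * gammaPdf α b l * c i := by
          simp_rw [← tsum_mul_right, mul_right_comm]
    _ = ∑' i, ∫ l in Ioi 0, poissonWeight (s * l) i * gammaPdf α b l * c i :=
          integral_tsum_of_nonneg
            (fun i => (integrableOn_poissonWeight_mul_gammaPdf hα hb hs i).mul_const _) hnn
            (by simpa only [hterm] using hsum.mul_left ((b / (b + s)) ^ α))
    _ = _ := by simp_rw [hterm, tsum_mul_left]

lemma ncFPdf_zero (k m f : ℝ) :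
    ncFPdf k m 0 f = Gamma ((k + m) / 2) / (Gamma (k / 2) * Gamma (m / 2)) *
      (k / m) ^ (k / 2) * f ^ (k / 2 - 1) * (1 + k * f / m) ^ (-(k + m) / 2) := by
  rw [ncFPdf, tsum_eq_single 0 fun i hi => by simp [zero_pow hi]]
  simp

lemma ncFPdf_eq_tsum_poissonWeight {k m f : ℝ} (hk : 0 < k) (hm : 0 < m) (hf : 0 < f) (l : ℝ) :
    ncFPdf k m l f = ∑' i, poissonWeight (2⁻¹ * l) i * (ncFPdf k m 0 f *
      (risingFac ((k + m) / 2) i / risingFac (k / 2) i * (k * f / (m + k * f)) ^ i)) := by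
  have hq : 0 < 1 + k * f / m := by positivity
  rw [ncFPdf_zero, ncFPdf]
  refine tsum_congr fun i => ?_
  rw [poissonWeight, Gamma_add_nat_eq_mul_risingFac (fun j => by positivity),
    Gamma_add_nat_eq_mul_risingFac (fun j => by positivity),
    rpow_add (by positivity), show k / 2 + (i : ℝ) - 1 = k / 2 - 1 + i by ring, rpow_add hf,
    rpow_sub hq, rpow_natCast, rpow_natCast, rpow_natCast,
    show k * f / (m + k * f) = k / m * f / (1 + k * f / m) by field_simp,
    div_pow (k / m * f), mul_pow (k / m), neg_div, inv_mul_eq_div]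
  have : risingFac (k / 2) i ≠ 0 := (risingFac_pos (by positivity) i).ne'
  field_simp

/-- Theorem 2.6: `F` Bayes factor. -/
theorem F_bayes_factor (k m τ r f : ℝ) (hk : 0 < k) (hm : 0 < m) (hτ : 0 < τ) (hr : 1 ≤ r)
    (hf : 0 < f) :
    ∫ l in Set.Ioi (0 : ℝ), ncFPdf k m l f * gammaPdf (k / 2 + r) (1 / (2 * τ ^ 2)) l
      = ncFPdf k m 0 f * (1 + τ ^ 2) ^ (-(k / 2 + r)) *
          twoF1 (k / 2 + r) ((k + m) / 2) (k / 2)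
            (k * f * τ ^ 2 / ((1 + τ ^ 2) * (m + k * f))) := by
  have hα : 0 < k / 2 + r := by linarith
  have hq0 : 0 < ncFPdf k m 0 f := by rw [ncFPdf_zero]; positivity
  have hrate : 1 / (2 * τ ^ 2) / (1 / (2 * τ ^ 2) + 2⁻¹) = (1 + τ ^ 2)⁻¹ := by field_simp
  have hprob : 2⁻¹ / (1 / (2 * τ ^ 2) + 2⁻¹) = τ ^ 2 / (1 + τ ^ 2) := by field_simp
  have hx : k * f * τ ^ 2 / ((1 + τ ^ 2) * (m + k * f))
      = τ ^ 2 / (1 + τ ^ 2) * (k * f / (m + k * f)) := by field_simp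
  have hsum := summable_twoF1_term (a := k / 2 + r) (b := (k + m) / 2) (c := k / 2)
    (x := τ ^ 2 / (1 + τ ^ 2) * (k * f / (m + k * f)))
    (fun n => by have := n.cast_nonneg (α := ℝ); exact ⟨by linarith, by linarith, by linarith⟩)
    (by rw [← hx, abs_of_pos (by positivity), div_lt_one (by positivity)]; nlinarith)
  have hc : ∀ i, 0 ≤ ncFPdf k m 0 f *
      (risingFac ((k + m) / 2) i / risingFac (k / 2) i * (k * f / (m + k * f)) ^ i) := fun i => by
    have := risingFac_pos (a := (k + m) / 2) (by positivity) i
    have := risingFac_pos (a := k / 2) (by positivity) i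
    positivity
  conv_lhs => enter [2, l]; rw [ncFPdf_eq_tsum_poissonWeight hk hm hf l]
  rw [integral_tsum_poissonWeight_mul_gammaPdf hα (by positivity) (by norm_num) hc, hrate, hprob,
    inv_rpow (by positivity), ← rpow_neg (by positivity), twoF1, ← tsum_mul_left,
    ← tsum_mul_left, hx]
  · exact tsum_congr fun i => by rw [mul_pow]; ring
  · refine hprob ▸ (hsum.mul_left (ncFPdf k m 0 f)).congr fun i => ?_
    rw [mul_pow]
    ring
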